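/- Let U be a connected weighted graph and let γ = (u_0, u_1, ..., u_m) be a path in U such that each internal vertex u_k (0 < k < m) has degree exactly 2 in U. Then every spanning tree of U contains all edges of γ except possibly one, and there exists a minimum spanning tree of U that contains all edges of γ except possibly a heaviest edge of γ. -/

import Mathlib

open SimpleGraph

/-- `T` is a spanning tree of `G`: a subgraph (on the same vertex set) that is
connected and acyclic. -/
def IsSpanningTree {V : Type*} (G T : SimpleGraph V) : Prop :=
  T ≤ G ∧ T.Connected ∧ T.IsAcyclic

/-- Total weight of the edges of a graph. -/
noncomputable def treeWeight {V : Type*} [Fintype V] (T : SimpleGraph V)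
    (w : Sym2 V → ℝ) : ℝ :=
  ∑ e ∈ T.edgeSet.toFinite.toFinset, w e

/-- `T` is a minimum spanning tree of `G` with respect to `w`. -/
def IsMST {V : Type*} [Fintype V] (G T : SimpleGraph V) (w : Sym2 V → ℝ) : Prop :=
  IsSpanningTree G T ∧
    ∀ T' : SimpleGraph V, IsSpanningTree G T' → treeWeight T w ≤ treeWeight T' w

/-!
An inner vertex of the chain has only its two chain neighbours in `U`. Hence if a subgraph
`H ≤ U` misses two chain edges, no edge of `H` leaves the segment of the chain strictly between
them, so `H` cannot reconnect the endpoints of either missing edge. For a spanning tree this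
contradicts connectivity. If a minimum spanning tree `T` misses a chain edge `e`, every other
chain edge `f` lies in `T` and the endpoints of `e` are separated in `T - f`, so `T - f + e` is
again a spanning tree and minimality gives `w f ≤ w e`.
-/

namespace SimpleGraph

variable {V : Type*} {G H : SimpleGraph V}

lemma Reachable.mem_of_adj_closed {S : Set V} (hS : ∀ ⦃x y⦄, x ∈ S → G.Adj x y → y ∈ S)
    {a b : V} (hab : G.Reachable a b) (ha : a ∈ S) : b ∈ S := by
  obtain ⟨q⟩ := hab
  induction q with
  | nil => exact ha
  | cons hadj _ ih => exact ih (hS ha hadj)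

lemma Connected.reachable_or_reachable_deleteEdges (hG : G.Connected) (x y v : V) :
    (G.deleteEdges {s(x, y)}).Reachable v x ∨ (G.deleteEdges {s(x, y)}).Reachable v y := by
  classical
  obtain ⟨P, hP⟩ := (hG.preconnected v x).exists_isPath
  by_cases he : s(x, y) ∈ P.edges
  · have hy := P.snd_mem_support_of_mem_edges he
    have hxy : x ≠ y := (P.adj_of_mem_edges he).ne
    refine .inr (reachable_deleteEdges_iff_exists_walk.mpr ⟨P.takeUntil y hy, fun h => ?_⟩)
    exact Walk.endpoint_notMem_support_takeUntil hP hy hxy (Walk.fst_mem_support_of_mem_edges _ h)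
  · exact .inl (reachable_deleteEdges_iff_exists_walk.mpr ⟨P, he⟩)

theorem IsTree.deleteEdges_sup_edge {T : SimpleGraph V} (hT : T.IsTree) {a b x y : V}
    (hxy : ¬(T.deleteEdges {s(a, b)}).Reachable x y) :
    (T.deleteEdges {s(a, b)} ⊔ edge x y).IsTree := by
  set F := T.deleteEdges {s(a, b)}
  have hF : F ≤ F ⊔ edge x y := le_sup_left
  have hadj : (F ⊔ edge x y).Reachable x y :=
    Adj.reachable (Or.inr ((edge_adj x y x y).mpr ⟨.inl ⟨rfl, rfl⟩, fun h => hxy (h ▸ .rfl)⟩))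
  have hab : (F ⊔ edge x y).Reachable a b := by
    rcases hT.connected.reachable_or_reachable_deleteEdges a b x with hx | hx <;>
    rcases hT.connected.reachable_or_reachable_deleteEdges a b y with hy | hy
    · exact absurd (hx.trans hy.symm) hxy
    · exact ((hx.mono hF).symm.trans hadj).trans (hy.mono hF)
    · exact ((hy.mono hF).symm.trans hadj.symm).trans (hx.mono hF)
    · exact absurd (hx.trans hy.symm) hxy
  refine ⟨(connected_iff_exists_forall_reachable _).mpr ⟨a, fun v => ?_⟩,
    (hT.isAcyclic.anti (deleteEdges_le _)).sup_edge_of_not_reachable hxy⟩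
  rcases hT.connected.reachable_or_reachable_deleteEdges a b v with hv | hv
  · exact (hv.mono hF).symm
  · exact hab.trans (hv.mono hF).symm

end SimpleGraph

namespace SimpleGraph.Walk

variable {V : Type*} {G H : SimpleGraph V} {u v : V} {p : G.Walk u v}

theorem IsPath.eq_getVert_of_adj_of_degree_eq_two [G.LocallyFinite] (hp : p.IsPath) {k : ℕ}
    (hk0 : 0 < k) (hk : k < p.length) (hdeg : G.degree (p.getVert k) = 2) {b : V}
    (hb : G.Adj (p.getVert k) b) : b = p.getVert (k - 1) ∨ b = p.getVert (k + 1) := by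
  classical
  have hne : p.getVert (k - 1) ≠ p.getVert (k + 1) := fun h => by
    have := hp.getVert_injOn (by simp; omega) (by simp; omega) h
    omega
  have hsub : {p.getVert (k - 1), p.getVert (k + 1)} ⊆ G.neighborFinset (p.getVert k) := by
    intro x hx
    rw [Finset.mem_insert, Finset.mem_singleton] at hx
    rw [mem_neighborFinset]
    rcases hx with rfl | rfl
    · simpa [Nat.sub_add_cancel hk0] using (p.adj_getVert_succ (i := k - 1) (by omega)).symm
    · exact p.adj_getVert_succ hk
  have hnbrs := Finset.eq_of_subset_of_card_le hsub
    (by rw [card_neighborFinset_eq_degree, hdeg, Finset.card_pair hne])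
  have hb' := (G.mem_neighborFinset _ _).mpr hb
  rw [← hnbrs] at hb'
  simpa using hb'

theorem IsPath.getVert_mem_image_Ioc_of_reachable [G.LocallyFinite] (hp : p.IsPath)
    (hdeg : ∀ k, 0 < k → k < p.length → G.degree (p.getVert k) = 2) (hH : H ≤ G) {i j : ℕ}
    (hj : j < p.length) (hiH : s(p.getVert i, p.getVert (i + 1)) ∉ H.edgeSet)
    (hjH : s(p.getVert j, p.getVert (j + 1)) ∉ H.edgeSet) {k : ℕ} (hk : k ∈ Set.Ioc i j)
    {b : V} (hb : H.Reachable (p.getVert k) b) : b ∈ p.getVert '' Set.Ioc i j := by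
  refine hb.mem_of_adj_closed ?_ ⟨k, hk, rfl⟩
  rintro _ y ⟨l, ⟨hil, hlj⟩, rfl⟩ hadj
  rcases hp.eq_getVert_of_adj_of_degree_eq_two (by omega) (by omega)
    (hdeg l (by omega) (by omega)) (hH hadj) with rfl | rfl
  · refine ⟨l - 1, ⟨Nat.lt_of_le_of_ne (by omega) fun hil' => hiH ?_, by omega⟩, rfl⟩
    simpa [hil', Nat.sub_add_cancel (by omega : 1 ≤ l), Sym2.eq_swap] using hadj
  · refine ⟨l + 1, ⟨by omega, Nat.succ_le_of_lt (Nat.lt_of_le_of_ne hlj ?_)⟩, rfl⟩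
    rintro rfl
    exact hjH hadj

theorem IsPath.not_reachable_getVert_succ [G.LocallyFinite] (hp : p.IsPath)
    (hdeg : ∀ k, 0 < k → k < p.length → G.degree (p.getVert k) = 2) (hH : H ≤ G) {i j : ℕ}
    (hij : i ≠ j) (hi : i < p.length) (hj : j < p.length)
    (hiH : s(p.getVert i, p.getVert (i + 1)) ∉ H.edgeSet)
    (hjH : s(p.getVert j, p.getVert (j + 1)) ∉ H.edgeSet) :
    ¬H.Reachable (p.getVert i) (p.getVert (i + 1)) := by
  intro hr
  rcases hij.lt_or_gt with h | h
  · obtain ⟨l, ⟨hl₁, hl₂⟩, heq⟩ := hp.getVert_mem_image_Ioc_of_reachable hdeg hH hj hiH hjH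
      ⟨Nat.lt_succ_self i, h⟩ hr.symm
    have := hp.getVert_injOn (by simp; omega) (by simp; omega) heq
    omega
  · obtain ⟨l, ⟨hl₁, hl₂⟩, heq⟩ := hp.getVert_mem_image_Ioc_of_reachable hdeg hH hi hjH hiH
      ⟨h, le_rfl⟩ hr
    have := hp.getVert_injOn (by simp; omega) (by simp; omega) heq
    omega

theorem IsPath.not_reachable_of_mem_edges [G.LocallyFinite] (hp : p.IsPath)
    (hdeg : ∀ x ∈ p.support, x ≠ u → x ≠ v → G.degree x = 2) (hH : H ≤ G) {x y : V}
    {f : Sym2 V} (he : s(x, y) ∈ p.edges) (hf : f ∈ p.edges) (hne : s(x, y) ≠ f)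
    (heH : s(x, y) ∉ H.edgeSet) (hfH : f ∉ H.edgeSet) : ¬H.Reachable x y := by
  have hdeg_getVert : ∀ k, 0 < k → k < p.length → G.degree (p.getVert k) = 2 := by
    intro k hk0 hk
    refine hdeg _ (p.getVert_mem_support k) (fun h => ?_) (fun h => ?_)
    · have := hp.getVert_injOn (by simp; omega) (by simp) (h.trans p.getVert_zero.symm)
      omega
    · have := hp.getVert_injOn (by simp; omega) (by simp) (h.trans p.getVert_length.symm)
      omega
  obtain ⟨i, hi, hxy⟩ := p.mk_mem_edges_iff_exists.mp he
  induction f using Sym2.ind with | _ a b =>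
  obtain ⟨j, hj, hab⟩ := p.mk_mem_edges_iff_exists.mp hf
  have key := hp.not_reachable_getVert_succ hdeg_getVert hH (i := i) (j := j)
    (by rintro rfl; exact hne (hxy ▸ hab)) hi hj (hxy ▸ heH) (hab ▸ hfH)
  intro hr
  rcases Sym2.eq_iff.mp hxy with ⟨h₁, h₂⟩ | ⟨h₁, h₂⟩
  · exact key (h₁ ▸ h₂ ▸ hr)
  · exact key (h₁ ▸ h₂ ▸ hr.symm)

end SimpleGraph.Walk

section MinimumSpanningTree

variable {V : Type*} [Fintype V]

lemma treeWeight_deleteEdges_singleton {T : SimpleGraph V} (w : Sym2 V → ℝ) {f : Sym2 V}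
    (hf : f ∈ T.edgeSet) : treeWeight (T.deleteEdges {f}) w = treeWeight T w - w f := by
  classical
  have hedges : (T.deleteEdges {f}).edgeSet.toFinite.toFinset =
      T.edgeSet.toFinite.toFinset.erase f := by
    ext
    simp [edgeSet_deleteEdges, and_comm]
  rw [treeWeight, hedges, Finset.sum_erase_eq_sub (by simpa using hf), treeWeight]

lemma treeWeight_sup_edge (G : SimpleGraph V) (w : Sym2 V → ℝ) {x y : V} (hxy : x ≠ y)
    (hG : ¬G.Adj x y) : treeWeight (G ⊔ edge x y) w = treeWeight G w + w s(x, y) := by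
  classical
  have hedges : (G ⊔ edge x y).edgeSet.toFinite.toFinset =
      insert s(x, y) G.edgeSet.toFinite.toFinset := by
    ext
    simp [edgeSet_sup, edgeSet_edge_of_ne hxy]
  rw [treeWeight, hedges, Finset.sum_insert (by simpa using hG), add_comm, treeWeight]

theorem SimpleGraph.Connected.exists_isMST {G : SimpleGraph V} (hG : G.Connected)
    (w : Sym2 V → ℝ) : ∃ T, IsMST G T w := by
  obtain ⟨T, hTG, hT⟩ := hG.exists_isTree_le
  obtain ⟨T₀, hT₀, hmin⟩ := Set.exists_min_image {T | IsSpanningTree G T} (treeWeight · w)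
    (Set.toFinite _) ⟨T, hTG, hT.connected, hT.isAcyclic⟩
  exact ⟨T₀, hT₀, hmin⟩

theorem IsMST.le_of_not_reachable_deleteEdges {G T : SimpleGraph V} {w : Sym2 V → ℝ}
    (hT : IsMST G T w) {f : Sym2 V} (hf : f ∈ T.edgeSet) {x y : V} (hxy : G.Adj x y)
    (hcut : ¬(T.deleteEdges {f}).Reachable x y) : w f ≤ w s(x, y) := by
  induction f using Sym2.ind with | _ a b =>
  have hexch := IsTree.deleteEdges_sup_edge ⟨hT.1.2.1, hT.1.2.2⟩ hcut
  have hle := hT.2 _ ⟨sup_le ((deleteEdges_le _).trans hT.1.1) ((edge_le_iff G).mpr (.inr hxy)),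
    hexch.connected, hexch.isAcyclic⟩
  rw [treeWeight_sup_edge _ _ hxy.ne fun h => hcut h.reachable,
    treeWeight_deleteEdges_singleton _ hf] at hle
  linarith

end MinimumSpanningTree

theorem chain_in_spanning_trees_general {V : Type*} [Fintype V]
    (U : SimpleGraph V) [DecidableRel U.Adj] (w : Sym2 V → ℝ) (hU : U.Connected)
    (u₀ uₘ : V) (p : U.Walk u₀ uₘ) (hp : p.IsPath)
    (hdeg : ∀ v ∈ p.support, v ≠ u₀ → v ≠ uₘ → U.degree v = 2) :
    (∀ T : SimpleGraph V, IsSpanningTree U T →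
      ∀ e ∈ p.edges, ∀ f ∈ p.edges,
        e ∉ T.edgeSet → f ∉ T.edgeSet → e = f) ∧
    (∃ T : SimpleGraph V, IsMST U T w ∧
      ∀ e ∈ p.edges, e ∉ T.edgeSet → ∀ f ∈ p.edges, w f ≤ w e) := by
  have hmissing : ∀ T : SimpleGraph V, IsSpanningTree U T →
      ∀ e ∈ p.edges, ∀ f ∈ p.edges, e ∉ T.edgeSet → f ∉ T.edgeSet → e = f := by
    rintro T ⟨hTU, hT, -⟩ e he f hf heT hfT
    induction e using Sym2.ind with | _ x y =>
    by_contra hne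
    exact hp.not_reachable_of_mem_edges hdeg hTU he hf hne heT hfT (hT.preconnected x y)
  refine ⟨hmissing, ?_⟩
  obtain ⟨T, hT⟩ := hU.exists_isMST w
  refine ⟨T, hT, fun e he heT f hf => ?_⟩
  induction e using Sym2.ind with | _ x y =>
  by_contra! hlt
  have hfT : f ∈ T.edgeSet := by
    by_contra hfT
    exact hlt.ne (congrArg w (hmissing T hT.1 _ he f hf heT hfT))
  refine hlt.not_ge (hT.le_of_not_reachable_deleteEdges hfT (p.adj_of_mem_edges he) ?_)
  exact hp.not_reachable_of_mem_edges hdeg ((deleteEdges_le _).trans hT.1.1) he hf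
    (by rintro rfl; exact lt_irrefl _ hlt) (fun h => heT (edgeSet_mono (deleteEdges_le _) h))
    (by simp)

/-- Let `γ = (u₀, …, u_m)` be a path in a connected weighted graph `U` all of whose
internal vertices have degree exactly 2 in `U`.  Then every spanning tree of `U`
contains all edges of `γ` except possibly one, and there is a minimum spanning tree
of `U` containing all edges of `γ` except possibly a heaviest edge of `γ`. -/
theorem chain_in_spanning_trees {V : Type*} [Fintype V] [DecidableEq V]
    (U : SimpleGraph V) [DecidableRel U.Adj] (w : Sym2 V → ℝ) (hU : U.Connected)
    (u₀ uₘ : V) (p : U.Walk u₀ uₘ) (hp : p.IsPath)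
    (hdeg : ∀ v ∈ p.support, v ≠ u₀ → v ≠ uₘ → U.degree v = 2) :
    (∀ T : SimpleGraph V, IsSpanningTree U T →
      ∀ e ∈ p.edges, ∀ f ∈ p.edges,
        e ∉ T.edgeSet → f ∉ T.edgeSet → e = f) ∧
    (∃ T : SimpleGraph V, IsMST U T w ∧
      ∀ e ∈ p.edges, e ∉ T.edgeSet → ∀ f ∈ p.edges, w f ≤ w e) :=
  chain_in_spanning_trees_general U w hU u₀ uₘ p hp hdeg
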